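/- Let X be a real random variable with mean μ, variance at most σ², and |X - μ| ≤ b almost surely. If x_1,…,x_N are i.i.d. copies of X, then for every t > 0, P(N^{-1}∑_{n=1}^N x_n - μ ≥ t) ≤ exp(- N t² / (2(σ² + b t / 3))). -/

import Mathlib

/-!
Chernoff's bound `P(∑ Yₙ ≥ N t) ≤ e^{-sNt} ∏ E e^{s Yₙ}` is applied to the centered variables
`Yₙ = xₙ - μ`. Since `eˣ ≤ 1 + x + x² / (2 (1 - c / 3))` for `x ≤ c < 3`, a centered `Y ≤ b` has
`E e^{sY} ≤ 1 + s² Var Y / (2 (1 - s b / 3)) ≤ exp (s² σ² / (2 (1 - s b / 3)))` for `0 ≤ s < 3 / b`,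
and optimizing over `s` gives the exponent `-N t² / (2 (σ² + b t / 3))`.
-/

open MeasureTheory ProbabilityTheory Real

theorem apply_le_of_hasDerivAt_of_monotone {f f' : ℝ → ℝ} (hf : ∀ x, HasDerivAt f (f' x) x)
    (hf' : Monotone f') {a : ℝ} (ha : f' a = 0) (x : ℝ) : f a ≤ f x := by
  have hcont : Continuous f := continuous_iff_continuousAt.2 fun y ↦ (hf y).continuousAt
  rcases lt_trichotomy x a with hxa | rfl | hax
  · obtain ⟨c, hc, hslope⟩ :=
      exists_hasDerivAt_eq_slope f f' hxa hcont.continuousOn fun y _ ↦ hf y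
    have : (f a - f x) / (a - x) ≤ 0 := hslope ▸ ha ▸ hf' hc.2.le
    rwa [div_le_iff₀ (sub_pos.2 hxa), zero_mul, sub_nonpos] at this
  · exact le_rfl
  · obtain ⟨c, hc, hslope⟩ :=
      exists_hasDerivAt_eq_slope f f' hax hcont.continuousOn fun y _ ↦ hf y
    have : 0 ≤ (f x - f a) / (x - a) := hslope ▸ ha ▸ hf' hc.1.le
    rwa [le_div_iff₀ (sub_pos.2 hax), zero_mul, sub_nonneg] at this

theorem exp_mul_one_sub_div_three_le (x : ℝ) :
    exp x * (1 - x / 3) ≤ 1 + 2 * x / 3 + x ^ 2 / 6 := by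
  set g : ℝ → ℝ := fun y ↦ 2 / 3 + y / 3 - exp y * (2 / 3 - y / 3)
  have hg : ∀ y, HasDerivAt g ((1 - exp y * (1 - y)) / 3) y := fun y ↦
    (((hasDerivAt_id' y).div_const 3).const_add (2 / 3) |>.fun_sub
      ((hasDerivAt_exp y).fun_mul (((hasDerivAt_id' y).div_const 3).const_sub (2 / 3)))).congr_deriv
      (by ring)
  have hg_mono : Monotone g := monotone_of_hasDerivAt_nonneg hg fun y ↦ by
    have : exp y * (1 - y) ≤ 1 := by
      simpa [← exp_add] using mul_le_mul_of_nonneg_left (one_sub_le_exp_neg y) (exp_pos y).le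
    simp only [Pi.zero_apply]
    linarith
  have hH : ∀ y, HasDerivAt (fun y ↦ 1 + 2 * y / 3 + y ^ 2 / 6 - exp y * (1 - y / 3)) (g y) y :=
    fun y ↦ ((((hasDerivAt_id' y).const_mul 2).div_const 3 |>.const_add 1 |>.fun_add
      ((hasDerivAt_pow 2 y).div_const 6)).fun_sub
      ((hasDerivAt_exp y).fun_mul (((hasDerivAt_id' y).div_const 3).const_sub 1))).congr_deriv
      (by simp only [g]; norm_num; ring)
  simpa using apply_le_of_hasDerivAt_of_monotone hH hg_mono (a := 0) (by simp [g]) x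

theorem exp_le_one_add_add_sq_div_of_le {x c : ℝ} (hxc : x ≤ c) (hc : c < 3) :
    exp x ≤ 1 + x + x ^ 2 / (2 * (1 - c / 3)) := by
  have hx : 0 < 1 - x / 3 := by linarith
  have hweaken : x ^ 2 / (2 * (1 - x / 3)) ≤ x ^ 2 / (2 * (1 - c / 3)) := by
    gcongr; linarith
  have hsharp : exp x ≤ 1 + x + x ^ 2 / (2 * (1 - x / 3)) := by
    rw [← sub_le_iff_le_add', le_div_iff₀ (by positivity)]
    nlinarith [exp_mul_one_sub_div_three_le x]
  linarith

/-- The optimal `s = t / (σ2 + b t / 3)` is inadmissible when `σ2 = 0` (then `s b = 3`); there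
`s = 3 / (2 b)` attains the same value. -/
theorem exists_bernstein_exponent {σ2 b t : ℝ} (hσ2 : 0 ≤ σ2) (hb : 0 < b) (ht : 0 < t) :
    ∃ s, 0 ≤ s ∧ s * b < 3 ∧
      -s * t + s ^ 2 * σ2 / (2 * (1 - s * b / 3)) = -t ^ 2 / (2 * (σ2 + b * t / 3)) := by
  rcases hσ2.eq_or_lt with rfl | hσ2
  · refine ⟨3 / (2 * b), by positivity, by field_simp; norm_num, ?_⟩
    field_simp
    ring
  · have hD : 0 < σ2 + b * t / 3 := by positivity
    refine ⟨t / (σ2 + b * t / 3), by positivity, ?_, ?_⟩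
    · rw [div_mul_eq_mul_div, div_lt_iff₀ hD]
      linarith
    · have : 1 - t / (σ2 + b * t / 3) * b / 3 = σ2 / (σ2 + b * t / 3) := by
        field_simp; ring
      rw [this]
      field_simp
      ring

section

variable {Ω : Type*} [MeasurableSpace Ω] {P : Measure Ω} [IsProbabilityMeasure P]

theorem mgf_le_exp_variance_of_le {Y : Ω → ℝ} (hY : MemLp Y 2 P) (hmean : P[Y] = 0)
    {b s : ℝ} (hbd : ∀ᵐ ω ∂P, Y ω ≤ b) (hs : 0 ≤ s) (hsb : s * b < 3) :
    mgf Y P s ≤ exp (s ^ 2 * variance Y P / (2 * (1 - s * b / 3))) := by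
  set k := s ^ 2 / (2 * (1 - s * b / 3))
  have hlin_int : Integrable (fun ω ↦ 1 + s * Y ω) P :=
    (integrable_const 1).add ((hY.integrable one_le_two).const_mul s)
  have hsq_int : Integrable (fun ω ↦ k * Y ω ^ 2) P := hY.integrable_sq.const_mul k
  calc mgf Y P s ≤ ∫ ω, 1 + s * Y ω + k * Y ω ^ 2 ∂P := by
        refine integral_mono_ae (integrable_exp_mul_of_le s b hs hY.aemeasurable hbd)
          (hlin_int.add hsq_int) ?_
        filter_upwards [hbd] with ω hω
        calc exp (s * Y ω) ≤ 1 + s * Y ω + (s * Y ω) ^ 2 / (2 * (1 - s * b / 3)) :=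
              exp_le_one_add_add_sq_div_of_le (by gcongr) hsb
          _ = 1 + s * Y ω + k * Y ω ^ 2 := by ring
    _ = 1 + k * variance Y P := by
        rw [integral_add hlin_int hsq_int, integral_add (integrable_const 1)
            ((hY.integrable one_le_two).const_mul s), integral_const_mul, integral_const_mul,
          variance_of_integral_eq_zero hY.aemeasurable hmean, hmean]
        simp
    _ ≤ exp (k * variance Y P) := by linarith [add_one_le_exp (k * variance Y P)]
    _ = exp (s ^ 2 * variance Y P / (2 * (1 - s * b / 3))) := by rw [mul_div_right_comm]

theorem measureReal_sum_ge_le_of_iIndepFun {ι : Type*} [Fintype ι] {Y : ι → Ω → ℝ}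
    (hindep : iIndepFun Y P) (hmeas : ∀ i, Measurable (Y i)) (hL2 : ∀ i, MemLp (Y i) 2 P)
    (hmean : ∀ i, P[Y i] = 0) {b σ2 s : ℝ} (hbd : ∀ i, ∀ᵐ ω ∂P, Y i ω ≤ b)
    (hvar : ∀ i, variance (Y i) P ≤ σ2) (hs : 0 ≤ s) (hsb : s * b < 3) (ε : ℝ) :
    P.real {ω | ε ≤ ∑ i, Y i ω} ≤
      exp (-s * ε + Fintype.card ι * (s ^ 2 * σ2 / (2 * (1 - s * b / 3)))) := by
  have hchernoff := measure_ge_le_exp_mul_mgf (X := ∑ i, Y i) ε hs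
    (hindep.integrable_exp_mul_sum hmeas fun i _ ↦
      integrable_exp_mul_of_le s b hs (hmeas i).aemeasurable (hbd i))
  simp only [Finset.sum_apply] at hchernoff
  have hmgf : ∀ i, mgf (Y i) P s ≤ exp (s ^ 2 * σ2 / (2 * (1 - s * b / 3))) := fun i ↦
    (mgf_le_exp_variance_of_le (hL2 i) (hmean i) (hbd i) hs hsb).trans <| by
      gcongr
      · linarith
      · exact hvar i
  calc P.real {ω | ε ≤ ∑ i, Y i ω} ≤ exp (-s * ε) * ∏ i, mgf (Y i) P s := by
        rwa [← hindep.mgf_sum hmeas]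
    _ ≤ exp (-s * ε) * ∏ _i : ι, exp (s ^ 2 * σ2 / (2 * (1 - s * b / 3))) := by
        gcongr with i
        · exact fun i _ ↦ mgf_nonneg
        · exact hmgf i
    _ = _ := by
        rw [Finset.prod_const, Finset.card_univ, ← exp_nat_mul, ← exp_add]

end

theorem bernstein_inequality_general
    {Ω : Type*} [MeasurableSpace Ω] (P : Measure Ω) [IsProbabilityMeasure P]
    (N : ℕ) (hN : 0 < N) (X : Fin N → Ω → ℝ)
    (hmeas : ∀ n, Measurable (X n))
    (hindep : iIndepFun X P)
    (μ σ2 b : ℝ) (hσ2 : 0 ≤ σ2) (hb : 0 < b)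
    (hmean : ∀ n, ∫ ω, X n ω ∂P = μ)
    (hvar : ∀ n, variance (X n) P ≤ σ2)
    (hbound : ∀ n, ∀ᵐ ω ∂P, |X n ω - μ| ≤ b) :
    ∀ t > 0,
      (P {ω | t ≤ (N : ℝ)⁻¹ * ∑ n, X n ω - μ}).toReal
        ≤ Real.exp (-((N : ℝ) * t ^ 2) / (2 * (σ2 + b * t / 3))) := by
  intro t ht
  have hL2 : ∀ n, MemLp (fun ω ↦ X n ω - μ) 2 P := fun n ↦
    .of_bound ((hmeas n).sub_const μ).aestronglyMeasurable b (by simpa using hbound n)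
  have hcentered : ∀ n, ∫ ω, X n ω - μ ∂P = 0 := fun n ↦ by
    have hint : Integrable (X n) P := by
      simpa using ((hL2 n).integrable one_le_two).fun_add (integrable_const μ)
    simp [integral_sub hint (integrable_const μ), hmean n]
  have hevent : {ω | t ≤ (N : ℝ)⁻¹ * ∑ n, X n ω - μ} = {ω | N * t ≤ ∑ n, (X n ω - μ)} := by
    ext ω
    rw [Set.mem_ofPred_eq, Set.mem_ofPred_eq, Finset.sum_sub_distrib, Finset.sum_const,
      Finset.card_univ, Fintype.card_fin, nsmul_eq_mul, le_sub_iff_add_le,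
      le_inv_mul_iff₀ (by exact_mod_cast hN)]
    constructor <;> intro h <;> linarith
  obtain ⟨s, hs, hsb, hexponent⟩ := exists_bernstein_exponent hσ2 hb ht
  calc (P {ω | t ≤ (N : ℝ)⁻¹ * ∑ n, X n ω - μ}).toReal
      ≤ exp (-s * (N * t) + Fintype.card (Fin N) * (s ^ 2 * σ2 / (2 * (1 - s * b / 3)))) := by
        rw [hevent]
        exact measureReal_sum_ge_le_of_iIndepFun
          (hindep.comp (fun _ x ↦ x - μ) fun _ ↦ measurable_id.sub_const μ)
          (fun n ↦ (hmeas n).sub_const μ) hL2 hcentered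
          (fun n ↦ (hbound n).mono fun _ h ↦ (abs_le.1 h).2)
          (fun n ↦ (variance_sub_const (hmeas n).aestronglyMeasurable μ).trans_le (hvar n))
          hs hsb _
    _ = exp (N * (-s * t + s ^ 2 * σ2 / (2 * (1 - s * b / 3)))) := by
        rw [Fintype.card_fin]; ring_nf
    _ = exp (-((N : ℝ) * t ^ 2) / (2 * (σ2 + b * t / 3))) := by
        rw [hexponent]; ring_nf

/-- Bernstein's inequality for i.i.d. bounded real random variables: if `X` has
mean `μ`, variance at most `σ²`, and `|X - μ| ≤ b` almost surely, then for i.i.d.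
copies `x₁,…,x_N` and every `t > 0`,
`P(N⁻¹ ∑ xₙ - μ ≥ t) ≤ exp(-N t² / (2(σ² + b t / 3)))`. -/
theorem bernstein_inequality
    {Ω : Type*} [MeasurableSpace Ω] (P : Measure Ω) [IsProbabilityMeasure P]
    (N : ℕ) (hN : 0 < N) (X : Fin N → Ω → ℝ)
    (hmeas : ∀ n, Measurable (X n))
    (hindep : iIndepFun X P)
    (hident : ∀ n, P.map (X n) = P.map (X ⟨0, hN⟩))
    (μ σ2 b : ℝ) (hσ2 : 0 ≤ σ2) (hb : 0 < b)
    (hmean : ∀ n, ∫ ω, X n ω ∂P = μ)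
    (hvar : ∀ n, variance (X n) P ≤ σ2)
    (hbound : ∀ n, ∀ᵐ ω ∂P, |X n ω - μ| ≤ b) :
    ∀ t > 0,
      (P {ω | t ≤ (N : ℝ)⁻¹ * ∑ n, X n ω - μ}).toReal
        ≤ Real.exp (-((N : ℝ) * t ^ 2) / (2 * (σ2 + b * t / 3))) :=
  bernstein_inequality_general P N hN X hmeas hindep μ σ2 b hσ2 hb hmean hvar hbound
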